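/- Let D be a triangulated category with a bounded co-t-structure (D_{\ge 0}, D_{\le 0}) and coheart S. Then D_{\ge 0} equals the smallest full additive subcategory of D containing all S[-k] for k \ge 0 and closed under extensions and direct summands, and D_{\le 0} equals the smallest full additive subcategory containing all S[k] for k \ge 0 and closed under extensions and direct summands. -/

import Mathlib

/-!
Both classes are closed under zero objects and extensions because each is an orthogonal:
`X ∈ D_{≥0}` iff `Hom(X, B) = 0` whenever `B[-1] ∈ D_{≤0}`, and `Y ∈ D_{≤0}` iff
`Hom(A, Y[1]) = 0` for all `A ∈ D_{≥0}`; under these conditions the decomposition triangle of `X`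
(resp. of `Y[1]`) has a zero map, hence splits.

Conversely, boundedness gives `X[n] ∈ D_{≤0}` for some `n ≥ 0` when `X ∈ D_{≥0}`, and we
induct on `n`. Decomposing `X[1]` as `A → X[1] → B` puts `B[-1]` in the coheart and `A[n]` in
`D_{≤0}`, and `X[-k]` is an extension of `A[-k-1]` and `B[-1][-k]`; this is why the induction
carries all the shifts `X[-k]`. The case of `D_{≤0}` is dual, decomposing `X` itself.
-/

open CategoryTheory Limits Pretriangulated

/-- A co-`t`-structure on a triangulated category: a pair of full additive subcategories
(given by iso-closed predicates) closed under direct summands, with the shift, orthogonality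
and decomposition-triangle axioms. -/
structure CoTStructure (C : Type*) [Category C] [Preadditive C] [HasZeroObject C]
    [HasShift C ℤ] [∀ n : ℤ, (shiftFunctor C n).Additive] [Pretriangulated C] where
  ge : C → Prop
  le : C → Prop
  ge_iso : ∀ {X Y : C}, (X ≅ Y) → ge X → ge Y
  le_iso : ∀ {X Y : C}, (X ≅ Y) → le X → le Y
  ge_summand : ∀ X Y : C, ge (X ⊞ Y) → ge X
  le_summand : ∀ X Y : C, le (X ⊞ Y) → le X
  ge_shift : ∀ X : C, ge X → ge (X⟦(-1 : ℤ)⟧)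
  le_shift : ∀ X : C, le X → le (X⟦(1 : ℤ)⟧)
  hom_zero : ∀ A B : C, ge A → le B → ∀ f : A ⟶ B⟦(1 : ℤ)⟧, f = 0
  exists_triangle : ∀ X : C, ∃ (A B : C) (f : A ⟶ X) (g : X ⟶ B) (h : B ⟶ A⟦(1 : ℤ)⟧),
    (Triangle.mk f g h ∈ distTriang C) ∧ ge A ∧ le (B⟦(-1 : ℤ)⟧)

namespace CategoryTheory.Pretriangulated.Triangle

variable {C : Type*} [Category C] [Preadditive C] [HasZeroObject C] [HasShift C ℤ]
    [∀ n : ℤ, (CategoryTheory.shiftFunctor C n).Additive] [Pretriangulated C]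

lemma exists_biprod_iso_obj₁_of_mor₂_eq_zero (T : Triangle C)
    (hT : T ∈ distTriang C) (h : T.mor₂ = 0) : ∃ Y : C, Nonempty (T.obj₂ ⊞ Y ≅ T.obj₁) := by
  obtain ⟨e, -, -⟩ := exists_iso_binaryBiproduct_of_distTriang _ (inv_rot_of_distTriang _ hT)
    (by simp [h]; rfl)
  exact ⟨_, ⟨biprod.braiding _ _ ≪≫ e.symm⟩⟩

lemma exists_biprod_iso_obj₃_of_mor₁_eq_zero (T : Triangle C)
    (hT : T ∈ distTriang C) (h : T.mor₁ = 0) : ∃ Y : C, Nonempty (T.obj₂ ⊞ Y ≅ T.obj₃) := by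
  obtain ⟨e, -, -⟩ := exists_iso_binaryBiproduct_of_distTriang _ (rot_of_distTriang _ hT)
    (by simp [h]; rfl)
  exact ⟨_, ⟨e.symm⟩⟩

end CategoryTheory.Pretriangulated.Triangle

namespace CoTStructure

variable {C : Type*} [Category C] [Preadditive C] [HasZeroObject C] [HasShift C ℤ]
    [∀ n : ℤ, (shiftFunctor C n).Additive] [Pretriangulated C] (t : CoTStructure C)

lemma ge_shift_anti {X : C} {a b : ℤ} (hab : b ≤ a) (h : t.ge (X⟦a⟧)) : t.ge (X⟦b⟧) := by
  induction b, hab using Int.leInductionDown with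
  | base => exact h
  | pred n _ ih =>
    exact t.ge_iso ((shiftFunctorAdd' C n (-1) (n - 1) (by ring)).app X).symm (t.ge_shift _ ih)

lemma le_shift_mono {X : C} {a b : ℤ} (hab : a ≤ b) (h : t.le (X⟦a⟧)) : t.le (X⟦b⟧) := by
  induction b, hab using Int.leInduction with
  | base => exact h
  | succ n _ ih =>
    exact t.le_iso ((shiftFunctorAdd' C n 1 (n + 1) rfl).app X).symm (t.le_shift _ ih)

lemma ge_shift_of_nonpos {X : C} (hX : t.ge X) {a : ℤ} (ha : a ≤ 0) : t.ge (X⟦a⟧) :=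
  t.ge_shift_anti ha (t.ge_iso ((shiftFunctorZero C ℤ).app X).symm hX)

lemma le_shift_of_nonneg {X : C} (hX : t.le X) {a : ℤ} (ha : 0 ≤ a) : t.le (X⟦a⟧) :=
  t.le_shift_mono ha (t.le_iso ((shiftFunctorZero C ℤ).app X).symm hX)

lemma hom_eq_zero {A B : C} (hA : t.ge A) (hB : t.le (B⟦(-1 : ℤ)⟧)) (f : A ⟶ B) : f = 0 := by
  let e : B⟦(-1 : ℤ)⟧⟦(1 : ℤ)⟧ ≅ B := (shiftFunctorCompIsoId C (-1) 1 (by ring)).app B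
  rw [← cancel_mono e.inv, zero_comp]
  exact t.hom_zero A _ hA hB _

lemma ge_iff_forall_hom_eq_zero (X : C) :
    t.ge X ↔ ∀ B : C, t.le (B⟦(-1 : ℤ)⟧) → ∀ f : X ⟶ B, f = 0 := by
  refine ⟨fun hX B hB f => t.hom_eq_zero hX hB f, fun h => ?_⟩
  obtain ⟨A, B, _, g, _, hT, hA, hB⟩ := t.exists_triangle X
  obtain ⟨Y, ⟨e⟩⟩ := Triangle.exists_biprod_iso_obj₁_of_mor₂_eq_zero _ hT (h B hB g)
  exact t.ge_summand X Y (t.ge_iso e.symm hA)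

lemma le_iff_forall_hom_eq_zero (Y : C) :
    t.le Y ↔ ∀ A : C, t.ge A → ∀ f : A ⟶ Y⟦(1 : ℤ)⟧, f = 0 := by
  refine ⟨fun hY A hA f => t.hom_zero A Y hA hY f, fun h => ?_⟩
  obtain ⟨A, B, f, _, _, hT, hA, hB⟩ := t.exists_triangle (Y⟦(1 : ℤ)⟧)
  obtain rfl := h A hA f
  obtain ⟨Z, ⟨e⟩⟩ := Triangle.exists_biprod_iso_obj₃_of_mor₁_eq_zero _
    (Triangle.shift_distinguished _ hT (-1)) (by
      change (-1 : ℤ).negOnePow • (0 : A ⟶ Y⟦(1 : ℤ)⟧)⟦(-1 : ℤ)⟧' = 0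
      rw [Functor.map_zero, smul_zero])
  have hY : t.le (Y⟦(1 : ℤ)⟧⟦(-1 : ℤ)⟧) := t.le_summand _ Z (t.le_iso e.symm hB)
  exact t.le_iso ((shiftFunctorCompIsoId C 1 (-1) (by ring)).app Y) hY

lemma ge_of_isZero {X : C} (hX : IsZero X) : t.ge X :=
  (t.ge_iff_forall_hom_eq_zero X).2 fun _ _ _ => hX.eq_of_src _ _

lemma le_of_isZero {Y : C} (hY : IsZero Y) : t.le Y :=
  (t.le_iff_forall_hom_eq_zero Y).2 fun _ _ _ =>
    ((shiftFunctor C (1 : ℤ)).map_isZero hY).eq_of_tgt _ _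

lemma ge_ext (T : Triangle C) (hT : T ∈ distTriang C) (h₁ : t.ge T.obj₁) (h₃ : t.ge T.obj₃) :
    t.ge T.obj₂ := by
  refine (t.ge_iff_forall_hom_eq_zero _).2 fun B hB f => ?_
  obtain ⟨u, rfl⟩ := Triangle.yoneda_exact₂ T hT f (t.hom_eq_zero h₁ hB _)
  rw [t.hom_eq_zero h₃ hB u, comp_zero]

lemma le_ext (T : Triangle C) (hT : T ∈ distTriang C) (h₁ : t.le T.obj₁) (h₃ : t.le T.obj₃) :
    t.le T.obj₂ := by
  refine (t.le_iff_forall_hom_eq_zero _).2 fun A hA f => ?_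
  obtain ⟨u, hu⟩ := Triangle.coyoneda_exact₂ _
    (rot_of_distTriang _ (rot_of_distTriang _ (rot_of_distTriang _ hT))) f (by
      change f ≫ (-(T.mor₂⟦(1 : ℤ)⟧')) = 0
      rw [Preadditive.comp_neg, t.hom_zero A _ hA h₃ (f ≫ _), neg_zero])
  rw [hu, t.hom_zero A _ hA h₁ u]
  exact zero_comp

lemma ge_induction (P : C → Prop) (hiso : ∀ {Y Z : C}, (Y ≅ Z) → P Y → P Z)
    (hext : ∀ T : Triangle C, T ∈ distTriang C → P T.obj₁ → P T.obj₃ → P T.obj₂)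
    (hcoheart : ∀ Y : C, t.ge Y → t.le Y → ∀ k : ℕ, P (Y⟦-(k : ℤ)⟧))
    (n : ℕ) {X : C} (hX : t.ge X) (hXn : t.le (X⟦(n : ℤ)⟧)) (k : ℕ) : P (X⟦-(k : ℤ)⟧) := by
  induction n generalizing X k with
  | zero => exact hcoheart X hX (t.le_iso ((shiftFunctorZero' C _ (by simp)).app X) hXn) k
  | succ n ih =>
    obtain ⟨A, B, _, _, _, hT, hA, hB⟩ := t.exists_triangle (X⟦(1 : ℤ)⟧)
    have hB' : t.ge (B⟦(-1 : ℤ)⟧) :=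
      t.ge_ext _ (inv_rot_of_distTriang _ (inv_rot_of_distTriang _ hT))
        (t.ge_iso ((shiftFunctorCompIsoId C 1 (-1) (by ring)).app X).symm hX) hA
    have hAn : t.le (A⟦(n : ℤ)⟧) :=
      t.le_ext _ (Triangle.shift_distinguished _ (inv_rot_of_distTriang _ hT) n)
        (t.le_shift_of_nonneg hB (by positivity))
        (t.le_iso ((shiftFunctorAdd' C 1 (n : ℤ) _ (by push_cast; ring)).app X) hXn)
    have hBk : P (B⟦-((k + 1 : ℕ) : ℤ)⟧) :=
      hiso ((shiftFunctorAdd' C (-1) (-(k : ℤ)) _ (by push_cast; ring)).app B).symm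
        (hcoheart _ hB' hB k)
    exact hiso ((shiftFunctorAdd' C 1 _ (-(k : ℤ)) (by push_cast; ring)).app X).symm
      (hext _ (Triangle.shift_distinguished _ hT _) (ih hA hAn (k + 1)) hBk)

lemma le_induction (P : C → Prop) (hiso : ∀ {Y Z : C}, (Y ≅ Z) → P Y → P Z)
    (hext : ∀ T : Triangle C, T ∈ distTriang C → P T.obj₁ → P T.obj₃ → P T.obj₂)
    (hcoheart : ∀ Y : C, t.ge Y → t.le Y → ∀ k : ℕ, P (Y⟦(k : ℤ)⟧))
    (n : ℕ) {X : C} (hX : t.le X) (hXn : t.ge (X⟦-(n : ℤ)⟧)) (k : ℕ) : P (X⟦(k : ℤ)⟧) := by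
  induction n generalizing X k with
  | zero => exact hcoheart X (t.ge_iso ((shiftFunctorZero' C _ (by simp)).app X) hXn) hX k
  | succ n ih =>
    obtain ⟨A, B, _, _, _, hT, hA, hB⟩ := t.exists_triangle X
    have hA' : t.le A := t.le_ext _ (inv_rot_of_distTriang _ hT) hB hX
    have hBn : t.ge (B⟦(-1 : ℤ)⟧⟦-(n : ℤ)⟧) := by
      have hA₁ : t.ge (A⟦(1 : ℤ)⟧⟦-((n + 1 : ℕ) : ℤ)⟧) :=
        t.ge_iso ((shiftFunctorAdd' C 1 _ (-(n : ℤ)) (by push_cast; ring)).app A)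
          (t.ge_shift_of_nonpos hA (by omega))
      exact t.ge_iso ((shiftFunctorAdd' C (-1) (-(n : ℤ)) _ (by push_cast; ring)).app B)
        (t.ge_ext _ (Triangle.shift_distinguished _ (rot_of_distTriang _ hT) _) hXn hA₁)
    have hBk : P (B⟦(k : ℤ)⟧) :=
      hiso ((shiftFunctorAdd' C (-1) ((k + 1 : ℕ) : ℤ) k (by push_cast; ring)).app B).symm
        (ih hB hBn (k + 1))
    exact hext _ (Triangle.shift_distinguished _ hT k) (hcoheart A hA hA' k) hBk

end CoTStructure

/-- For a bounded co-`t`-structure with coheart `S`, the class `D_{≥0}` is exactly the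
smallest full additive subcategory containing all `S[-k]` for `k ≥ 0` and closed under
extensions and direct summands, and `D_{≤0}` is exactly the smallest such subcategory
containing all `S[k]` for `k ≥ 0`. -/
theorem coTStructure_determined_by_coheart
    {C : Type*} [Category C] [Preadditive C] [HasZeroObject C] [HasShift C ℤ]
    [∀ n : ℤ, (shiftFunctor C n).Additive] [Pretriangulated C]
    (t : CoTStructure C)
    (hbdd₁ : ∀ X : C, ∃ n : ℤ, t.ge (X⟦n⟧))
    (hbdd₂ : ∀ X : C, ∃ n : ℤ, t.le (X⟦n⟧)) :
    (∀ X : C, t.ge X ↔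
      (∀ P : C → Prop,
        (∀ {Y Z : C}, (Y ≅ Z) → P Y → P Z) →
        (∀ Y : C, IsZero Y → P Y) →
        (∀ T : Triangle C, (T ∈ distTriang C) → P T.obj₁ → P T.obj₃ → P T.obj₂) →
        (∀ Y Z : C, P (Y ⊞ Z) → P Y) →
        (∀ Y : C, t.ge Y → t.le Y → ∀ k : ℕ, P (Y⟦-(k : ℤ)⟧)) →
        P X)) ∧
    (∀ X : C, t.le X ↔
      (∀ P : C → Prop,
        (∀ {Y Z : C}, (Y ≅ Z) → P Y → P Z) →
        (∀ Y : C, IsZero Y → P Y) →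
        (∀ T : Triangle C, (T ∈ distTriang C) → P T.obj₁ → P T.obj₃ → P T.obj₂) →
        (∀ Y Z : C, P (Y ⊞ Z) → P Y) →
        (∀ Y : C, t.ge Y → t.le Y → ∀ k : ℕ, P (Y⟦(k : ℤ)⟧)) →
        P X)) := by
  refine ⟨fun X => ⟨fun hX P hiso _ hext _ hcoheart => ?_, fun h => ?_⟩,
    fun X => ⟨fun hX P hiso _ hext _ hcoheart => ?_, fun h => ?_⟩⟩
  · obtain ⟨m, hm⟩ := hbdd₂ X
    exact hiso ((shiftFunctorZero' C _ (by simp)).app X) (t.ge_induction P hiso hext hcoheart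
      m.toNat hX (t.le_shift_mono (Int.self_le_toNat m) hm) 0)
  · exact h t.ge t.ge_iso (fun _ => t.ge_of_isZero) t.ge_ext t.ge_summand
      fun Y hY _ k => t.ge_shift_of_nonpos hY (by omega)
  · obtain ⟨m, hm⟩ := hbdd₁ X
    exact hiso ((shiftFunctorZero' C _ (by simp)).app X) (t.le_induction P hiso hext hcoheart
      (-m).toNat hX (t.ge_shift_anti (by omega) hm) 0)
  · exact h t.le t.le_iso (fun _ => t.le_of_isZero) t.le_ext t.le_summand
      fun Y _ hY k => t.le_shift_of_nonneg hY (by omega)
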